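/- arXiv:1309.4709 — 2 statements merged into one kernel-verified Lean document; each statement's English description precedes it below -/
import Mathlib

section
/- Let n ≥ 1 be an integer. Then the Douglas–Rachford operator T satisfies ‖T^n − P_{Fix T}‖ = c_F^n, where ‖·‖ is the operator norm and c_F is the cosine of the Friedrichs angle between U and V. -/
noncomputable section

variable {X : Type*} [NormedAddCommGroup X] [InnerProductSpace ℝ X] [CompleteSpace X]

/-- The orthogonal projection onto a closed subspace `W`, as an operator on `X`. -/
noncomputable def proj (W : Submodule ℝ X) [W.HasOrthogonalProjection] : X →L[ℝ] X :=
  W.subtypeL.comp (W.orthogonalProjectionOnto)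

instance infHOP (U V : Submodule ℝ X) [CompleteSpace U] [CompleteSpace V] :
    (U ⊓ V).HasOrthogonalProjection := by
  have hU : IsClosed (U : Set X) := (completeSpace_coe_iff_isComplete.mp ‹_›).isClosed
  have hV : IsClosed (V : Set X) := (completeSpace_coe_iff_isComplete.mp ‹_›).isClosed
  have : CompleteSpace (U ⊓ V : Submodule ℝ X) := (hU.inter hV).completeSpace_coe
  infer_instance

/-- The fixed point set `Fix T = {x | T x = x}` of a continuous linear operator `T`,
as a submodule of `X`. -/
noncomputable def fixedSpace (T : X →L[ℝ] X) : Submodule ℝ X := LinearMap.ker ((T - 1 : X →L[ℝ] X) : X →ₗ[ℝ] X)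

instance fixedSpaceHOP (T : X →L[ℝ] X) : (fixedSpace T).HasOrthogonalProjection := by
  have h : IsClosed ((fixedSpace T : Submodule ℝ X) : Set X) := by
    have : ((fixedSpace T : Submodule ℝ X) : Set X) = {x | T x = x} := by
      ext x; simp [fixedSpace, LinearMap.mem_ker, sub_eq_zero]
    rw [this]
    exact isClosed_eq T.continuous continuous_id
  have : CompleteSpace (fixedSpace T) := h.completeSpace_coe
  infer_instance

/-- The reflector `R_W = 2 P_W − Id` associated with `W`. -/
noncomputable def reflector (W : Submodule ℝ X) [W.HasOrthogonalProjection] : X →L[ℝ] X :=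
  2 • proj W - 1

/-- The Douglas–Rachford operator `T = T_{V,U} = P_V (2 P_U − Id) + Id − P_U`.
(The first argument is `U`, the second is `V`.) -/
noncomputable def drOperator (U V : Submodule ℝ X) [U.HasOrthogonalProjection]
    [V.HasOrthogonalProjection] : X →L[ℝ] X :=
  proj V * (2 • proj U - 1) + 1 - proj U

/-- The cosine of the Friedrichs angle between `U` and `V`. -/
noncomputable def friedrichs (U V : Submodule ℝ X) : ℝ :=
  sSup {c : ℝ | ∃ u v : X, u ∈ U ⊓ (U ⊓ V)ᗮ ∧ v ∈ V ⊓ (U ⊓ V)ᗮ ∧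
    ‖u‖ ≤ 1 ∧ ‖v‖ ≤ 1 ∧ c = inner ℝ u v}

/-!
Write `p = P_U`, `q = P_V`. Then `T = qp + (1 - q)(1 - p)`, and both `T* T` and `T T*` equal `J²`
for the self-adjoint `J = p + q - 1`. The fixed space of `T` is `(U ⊓ V) ⊕ (Uᗮ ⊓ Vᗮ)`, on which
`J` acts as `±1`, so `A = T - P_Fix` is normal with `A* A = G²` for the self-adjoint
`G = J P_{Fixᗮ}`, and `A^n = T^n - P_Fix`. In a C*-ring a normal element satisfies
`‖A^n‖ = ‖A‖^n`, and `‖A‖ = ‖G‖`.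

For `y ∈ Fixᗮ` we have `⟪G y, y⟫ = ‖p y‖² + ‖q y‖² - ‖y‖²`. The upper bound `c_F ‖y‖²` is a
Cauchy–Schwarz estimate. The lower bound `-c_F ‖y‖²` is the same kind of estimate on
`U ⊓ (U ⊓ V)ᗮ + V ⊓ (U ⊓ V)ᗮ`, extended to its closure, which contains `Fixᗮ`; this is where
completeness enters. Conversely `A u = q u` for `u ∈ U ⊓ (U ⊓ V)ᗮ`, so `c_F ≤ ‖A‖`.
-/

open Submodule

section StarProjection

variable {E : Type*} [NormedAddCommGroup E] [InnerProductSpace ℝ E]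
  {K L M : Submodule ℝ E} [K.HasOrthogonalProjection] [L.HasOrthogonalProjection]

theorem mul_starProjection_of_le (h : K ≤ L) :
    L.starProjection * K.starProjection = K.starProjection :=
  ContinuousLinearMap.ext fun x => starProjection_eq_self_iff.mpr (h (K.starProjection_apply_mem x))

theorem starProjection_mul_of_isOrtho (h : K ⟂ L) : K.starProjection * L.starProjection = 0 :=
  h.starProjection_comp_starProjection

omit [L.HasOrthogonalProjection] in
theorem real_inner_starProjection_self (x : E) :
    inner ℝ (K.starProjection x) x = ‖K.starProjection x‖ ^ 2 := by
  have h := K.starProjection_inner_eq_zero x _ (K.starProjection_apply_mem x)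
  rw [inner_sub_left, sub_eq_zero] at h
  rw [real_inner_comm, h, real_inner_self_eq_norm_sq]

omit [K.HasOrthogonalProjection] in
theorem starProjection_apply_mem_orthogonal_of_le (h : K ≤ L) {x : E} (hx : x ∈ Kᗮ) :
    L.starProjection x ∈ Kᗮ := fun w hw => by
  rw [← inner_starProjection_left_eq_right, starProjection_eq_self_iff.mpr (h hw)]
  exact hx w hw

theorem starProjection_eq_add_of_isOrtho [M.HasOrthogonalProjection] (h : K ⟂ L)
    (hM : M = K ⊔ L) : M.starProjection = K.starProjection + L.starProjection := by
  subst hM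
  ext x
  refine eq_starProjection_of_mem_of_inner_eq_zero (add_mem (mem_sup_left
    (K.starProjection_apply_mem x)) (mem_sup_right (L.starProjection_apply_mem x))) fun w hw => ?_
  obtain ⟨k, hk, l, hl, rfl⟩ := mem_sup.mp hw
  have hxk : inner ℝ (x - K.starProjection x - L.starProjection x) k = 0 := by
    rw [inner_sub_left, K.starProjection_inner_eq_zero x k hk,
      h.symm.inner_eq (L.starProjection_apply_mem x) hk, sub_zero]
  have hxl : inner ℝ (x - K.starProjection x - L.starProjection x) l = 0 := by
    rw [sub_right_comm, inner_sub_left, L.starProjection_inner_eq_zero x l hl,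
      h.inner_eq (K.starProjection_apply_mem x) hl, sub_zero]
  rw [add_apply, ← sub_sub, inner_add_right, hxk, hxl, add_zero]

omit [L.HasOrthogonalProjection] in
theorem orthogonal_eq_inf_orthogonal_of_le (h : K ≤ L) : Lᗮ = Kᗮ ⊓ (L ⊓ Kᗮ)ᗮ := by
  conv_lhs => rw [← sup_orthogonal_inf_of_hasOrthogonalProjection h]
  rw [← inf_orthogonal, inf_comm L]

end StarProjection

theorem IsSelfAdjoint.norm_le_of_abs_inner_le {E : Type*} [NormedAddCommGroup E]
    [InnerProductSpace ℝ E] [CompleteSpace E] {T : E →L[ℝ] E} (hT : IsSelfAdjoint T) {c : ℝ}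
    (hc : 0 ≤ c) (h : ∀ x, |inner ℝ (T x) x| ≤ c * ‖x‖ ^ 2) : ‖T‖ ≤ c := by
  rw [T.norm_eq_iSup_rayleighQuotient hT.isSymmetric]
  refine ciSup_le fun x => ?_
  rw [ContinuousLinearMap.rayleighQuotient, ContinuousLinearMap.reApplyInnerSelf_apply,
    RCLike.re_to_real, abs_div, abs_sq]
  exact div_le_of_le_mul₀ (sq_nonneg _) hc (h x)

section Ring

variable {R : Type*} [Ring R]

theorem sub_mul_sub_of_mul_eq {s t f : R} (hs : s * f = f) (ht : f * t = f)
    (hf : IsIdempotentElem f) : (s - f) * (t - f) = s * t - f := by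
  have h : (s - f) * (t - f) = s * t - s * f - f * t + f * f := by noncomm_ring
  rw [h, hs, ht, hf.eq]
  abel

theorem sub_pow_of_mul_eq {t f : R} (ht : t * f = f) (ht' : f * t = f) (hf : IsIdempotentElem f)
    {n : ℕ} (hn : 0 < n) : (t - f) ^ n = t ^ n - f := by
  have htf (k : ℕ) : t ^ k * f = f := by
    induction k with
    | zero => rw [pow_zero, one_mul]
    | succ k ih => rw [pow_succ, mul_assoc, ht, ih]
  induction n, hn using Nat.le_induction with
  | base => rw [pow_one, pow_one]
  | succ n _ ih => rw [pow_succ, ih, sub_mul_sub_of_mul_eq (htf n) ht' hf, pow_succ]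

theorem mul_add_one_sub_mul_one_sub_eq_sq {p q : R} (hq : IsIdempotentElem q) :
    (p * q + (1 - p) * (1 - q)) * (q * p + (1 - q) * (1 - p)) = (p + q - 1) ^ 2 := by
  have h : (p * q + (1 - p) * (1 - q)) * (q * p + (1 - q) * (1 - p)) - (p + q - 1) ^ 2
      = (2 * p - 1) * (q * q - q) * (2 * p - 1) - (q * q - q) := by noncomm_ring
  rwa [hq.eq, sub_self, mul_zero, zero_mul, sub_zero, sub_eq_zero] at h

end Ring

section CStarRing

variable {A : Type*} [NormedRing A] [StarRing A] [CStarRing A]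

omit [StarRing A] [CStarRing A] in
theorem norm_pow_eq_of_norm_pow_eq {a : A} {m n : ℕ} (hm : ‖a ^ m‖ = ‖a‖ ^ m) (hn : 0 < n)
    (hnm : n ≤ m) : ‖a ^ n‖ = ‖a‖ ^ n := by
  obtain ⟨k, rfl⟩ := Nat.exists_eq_add_of_le hnm
  rcases k.eq_zero_or_pos with rfl | hk
  · exact hm
  refine le_antisymm (norm_pow_le' a hn) ?_
  rcases (norm_nonneg a).eq_or_lt with h0 | h0
  · rw [← h0, zero_pow hn.ne']
    exact norm_nonneg _
  refine le_of_mul_le_mul_right ?_ (pow_pos h0 k)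
  calc ‖a‖ ^ n * ‖a‖ ^ k = ‖a ^ n * a ^ k‖ := by rw [← pow_add, ← pow_add, hm]
    _ ≤ ‖a ^ n‖ * ‖a ^ k‖ := norm_mul_le _ _
    _ ≤ ‖a ^ n‖ * ‖a‖ ^ k := by gcongr; exact norm_pow_le' a hk

theorem IsSelfAdjoint.norm_pow {a : A} (ha : IsSelfAdjoint a) {n : ℕ} (hn : 0 < n) :
    ‖a ^ n‖ = ‖a‖ ^ n :=
  norm_pow_eq_of_norm_pow_eq (ha.norm_pow_two_pow n) hn Nat.lt_two_pow_self.le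

theorem IsStarNormal.norm_pow (a : A) [IsStarNormal a] {n : ℕ} (hn : 0 < n) :
    ‖a ^ n‖ = ‖a‖ ^ n := by
  have h : ‖a ^ n‖ ^ 2 = (‖a‖ ^ n) ^ 2 := by
    rw [sq, ← CStarRing.norm_star_mul_self, star_pow, ← (star_comm_self (x := a)).mul_pow,
      (IsSelfAdjoint.star_mul_self a).norm_pow hn, CStarRing.norm_star_mul_self, ← pow_mul, ← sq,
      ← pow_mul, mul_comm]
  exact (pow_left_inj₀ (norm_nonneg _) (by positivity) two_ne_zero).mp h

end CStarRing

section Friedrichs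

omit [CompleteSpace X]

variable (U V : Submodule ℝ X)

theorem bddAbove_friedrichs_set : BddAbove {c : ℝ | ∃ u v : X, u ∈ U ⊓ (U ⊓ V)ᗮ ∧
    v ∈ V ⊓ (U ⊓ V)ᗮ ∧ ‖u‖ ≤ 1 ∧ ‖v‖ ≤ 1 ∧ c = inner ℝ u v} := by
  refine ⟨1, ?_⟩
  rintro _ ⟨u, v, -, -, hu, hv, rfl⟩
  exact (real_inner_le_norm u v).trans (mul_le_one₀ hu (norm_nonneg v) hv)

theorem friedrichs_nonneg : 0 ≤ friedrichs U V :=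
  le_csSup (bddAbove_friedrichs_set U V) ⟨0, 0, zero_mem _, zero_mem _, by simp, by simp, by simp⟩

theorem inner_le_friedrichs_mul {u v : X} (hu : u ∈ U ⊓ (U ⊓ V)ᗮ) (hv : v ∈ V ⊓ (U ⊓ V)ᗮ) :
    inner ℝ u v ≤ friedrichs U V * (‖u‖ * ‖v‖) := by
  rcases eq_or_ne u 0 with rfl | hu0
  · simp
  rcases eq_or_ne v 0 with rfl | hv0
  · simp
  have hmem := le_csSup (bddAbove_friedrichs_set U V) ⟨‖u‖⁻¹ • u, ‖v‖⁻¹ • v,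
    smul_mem _ _ hu, smul_mem _ _ hv, by simp [norm_smul, hu0], by simp [norm_smul, hv0], rfl⟩
  rw [real_inner_smul_left, real_inner_smul_right] at hmem
  calc inner ℝ u v = (‖u‖ * ‖v‖) * (‖u‖⁻¹ * (‖v‖⁻¹ * inner ℝ u v)) := by field_simp
    _ ≤ (‖u‖ * ‖v‖) * friedrichs U V := by gcongr; exact hmem
    _ = friedrichs U V * (‖u‖ * ‖v‖) := mul_comm _ _

variable [U.HasOrthogonalProjection] [V.HasOrthogonalProjection]

theorem norm_sq_add_norm_sq_starProjection_le {x : X} (hx : x ∈ (U ⊓ V)ᗮ) :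
    ‖U.starProjection x‖ ^ 2 + ‖V.starProjection x‖ ^ 2 ≤ (1 + friedrichs U V) * ‖x‖ ^ 2 := by
  have hc := friedrichs_nonneg U V
  have hab := inner_le_friedrichs_mul U V
    (mem_inf.mpr ⟨U.starProjection_apply_mem x,
      starProjection_apply_mem_orthogonal_of_le inf_le_left hx⟩)
    (mem_inf.mpr ⟨V.starProjection_apply_mem x,
      starProjection_apply_mem_orthogonal_of_le inf_le_right hx⟩)
  have hs : ‖U.starProjection x‖ ^ 2 + ‖V.starProjection x‖ ^ 2
      ≤ ‖U.starProjection x + V.starProjection x‖ * ‖x‖ := by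
    rw [← real_inner_starProjection_self, ← real_inner_starProjection_self, ← inner_add_left]
    exact real_inner_le_norm _ _
  have hsum : ‖U.starProjection x + V.starProjection x‖ ^ 2
      ≤ (1 + friedrichs U V) * (‖U.starProjection x‖ ^ 2 + ‖V.starProjection x‖ ^ 2) := by
    rw [norm_add_sq_real]
    nlinarith [mul_nonneg hc (sq_nonneg (‖U.starProjection x‖ - ‖V.starProjection x‖))]
  have hs0 : 0 ≤ ‖U.starProjection x‖ ^ 2 + ‖V.starProjection x‖ ^ 2 := by positivity
  generalize ‖U.starProjection x‖ ^ 2 + ‖V.starProjection x‖ ^ 2 = s at hs hsum hs0 ⊢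
  generalize ‖U.starProjection x + V.starProjection x‖ = m at hs hsum
  have hs2 : s ^ 2 ≤ (1 + friedrichs U V) * ‖x‖ ^ 2 * s := by
    calc s ^ 2 ≤ (m * ‖x‖) ^ 2 := pow_le_pow_left₀ hs0 hs 2
      _ ≤ (1 + friedrichs U V) * s * ‖x‖ ^ 2 := by rw [mul_pow]; gcongr
      _ = (1 + friedrichs U V) * ‖x‖ ^ 2 * s := by ring
  nlinarith [mul_nonneg (by linarith : (0 : ℝ) ≤ 1 + friedrichs U V) (sq_nonneg ‖x‖)]

theorem le_norm_sq_add_norm_sq_starProjection_of_mem_sup {x : X}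
    (hx : x ∈ U ⊓ (U ⊓ V)ᗮ ⊔ V ⊓ (U ⊓ V)ᗮ) :
    (1 - friedrichs U V) * ‖x‖ ^ 2 ≤ ‖U.starProjection x‖ ^ 2 + ‖V.starProjection x‖ ^ 2 := by
  obtain ⟨u, hu, v, hv, rfl⟩ := mem_sup.mp hx
  set α := ‖U.starProjection (u + v)‖
  set β := ‖V.starProjection (u + v)‖
  have hinner {K : Submodule ℝ X} [K.HasOrthogonalProjection] {w : X} (hw : w ∈ K) :
      inner ℝ (u + v) w ≤ ‖K.starProjection (u + v)‖ * ‖w‖ := by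
    have h : inner ℝ (K.starProjection (u + v)) w = inner ℝ (u + v) w := by
      rw [inner_starProjection_left_eq_right, starProjection_eq_self_iff.mpr hw]
    rw [← h]
    exact real_inner_le_norm _ _
  have h1 : ‖u + v‖ ^ 2 ≤ α * ‖u‖ + β * ‖v‖ := by
    rw [← real_inner_self_eq_norm_sq, inner_add_right]
    exact add_le_add (hinner hu.1) (hinner hv.1)
  have h2 : (1 - friedrichs U V) * (‖u‖ ^ 2 + ‖v‖ ^ 2) ≤ ‖u + v‖ ^ 2 := by
    have h := inner_le_friedrichs_mul U V hu (neg_mem hv)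
    rw [inner_neg_right, norm_neg] at h
    rw [norm_add_sq_real]
    nlinarith [mul_nonneg (friedrichs_nonneg U V) (sq_nonneg (‖u‖ - ‖v‖))]
  have h3 : (α * ‖u‖ + β * ‖v‖) ^ 2 ≤ (α ^ 2 + β ^ 2) * (‖u‖ ^ 2 + ‖v‖ ^ 2) := by
    nlinarith [sq_nonneg (α * ‖v‖ - β * ‖u‖)]
  rcases le_or_gt 1 (friedrichs U V) with hc | hc
  · nlinarith [sq_nonneg α, sq_nonneg β, sq_nonneg ‖u + v‖]
  rcases (sq_nonneg ‖u + v‖).eq_or_lt with h0 | h0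
  · rw [← h0, mul_zero]
    positivity
  refine le_of_mul_le_mul_right ?_ h0
  calc (1 - friedrichs U V) * ‖u + v‖ ^ 2 * ‖u + v‖ ^ 2
      ≤ (1 - friedrichs U V) * (α * ‖u‖ + β * ‖v‖) ^ 2 := by
        rw [mul_assoc, ← sq]; gcongr
    _ ≤ (α ^ 2 + β ^ 2) * ((1 - friedrichs U V) * (‖u‖ ^ 2 + ‖v‖ ^ 2)) := by
        rw [mul_left_comm]; exact mul_le_mul_of_nonneg_left h3 (sub_pos.mpr hc).le
    _ ≤ (α ^ 2 + β ^ 2) * ‖u + v‖ ^ 2 := by gcongr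

end Friedrichs

section DouglasRachford

omit [CompleteSpace X]

theorem proj_eq_starProjection (K : Submodule ℝ X) [K.HasOrthogonalProjection] :
    proj K = K.starProjection := rfl

theorem mem_fixedSpace {T : X →L[ℝ] X} {x : X} : x ∈ fixedSpace T ↔ T x = x := by
  simp [fixedSpace, sub_eq_zero]

theorem mul_starProjection_of_le_fixedSpace {T : X →L[ℝ] X} {K : Submodule ℝ X}
    [K.HasOrthogonalProjection] (h : K ≤ fixedSpace T) : T * K.starProjection = K.starProjection :=
  ContinuousLinearMap.ext fun x => mem_fixedSpace.mp (h (K.starProjection_apply_mem x))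

variable (U V : Submodule ℝ X) [U.HasOrthogonalProjection] [V.HasOrthogonalProjection]

theorem drOperator_eq : drOperator U V =
    V.starProjection * U.starProjection + Vᗮ.starProjection * Uᗮ.starProjection := by
  rw [starProjection_orthogonal', starProjection_orthogonal', drOperator, proj_eq_starProjection,
    proj_eq_starProjection]
  noncomm_ring

theorem starProjection_mul_drOperator :
    V.starProjection * drOperator U V = V.starProjection * U.starProjection := by
  rw [drOperator_eq, mul_add, ← mul_assoc, ← mul_assoc, V.isIdempotentElem_starProjection.eq,
    starProjection_mul_of_isOrtho V.isOrtho_orthogonal_right, zero_mul, add_zero]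

theorem starProjection_orthogonal_mul_drOperator :
    Vᗮ.starProjection * drOperator U V = Vᗮ.starProjection * Uᗮ.starProjection := by
  rw [drOperator_eq, mul_add, ← mul_assoc, ← mul_assoc, Vᗮ.isIdempotentElem_starProjection.eq,
    starProjection_mul_of_isOrtho V.isOrtho_orthogonal_left, zero_mul, zero_add]

theorem fixedSpace_drOperator : fixedSpace (drOperator U V) = U ⊓ V ⊔ Uᗮ ⊓ Vᗮ := by
  refine le_antisymm (fun x hx => ?_) (sup_le (fun x hx => ?_) fun x hx => ?_)
  · rw [mem_fixedSpace] at hx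
    have hV : V.starProjection (Uᗮ.starProjection x) = 0 := by
      have h := congr($(starProjection_mul_drOperator U V) x)
      rwa [mul_apply_eq_comp, mul_apply_eq_comp, hx, ← sub_eq_zero, ← map_sub,
        ← starProjection_orthogonal_val] at h
    have hVo : Vᗮ.starProjection (U.starProjection x) = 0 := by
      have h := congr($(starProjection_orthogonal_mul_drOperator U V) x)
      rwa [mul_apply_eq_comp, mul_apply_eq_comp, hx, ← sub_eq_zero, ← map_sub,
        starProjection_orthogonal_val (K := U), sub_sub_cancel] at h
    rw [← U.starProjection_add_starProjection_orthogonal x]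
    refine add_mem_sup (mem_inf.mpr ⟨U.starProjection_apply_mem x, ?_⟩)
      (mem_inf.mpr ⟨Uᗮ.starProjection_apply_mem x, ?_⟩)
    · simpa only [starProjection_apply_eq_zero_iff, orthogonal_orthogonal] using hVo
    · exact (starProjection_apply_eq_zero_iff _).mp hV
  · rw [mem_fixedSpace, drOperator_eq, add_apply, mul_apply_eq_comp, mul_apply_eq_comp,
      starProjection_eq_self_iff.mpr hx.1, starProjection_eq_self_iff.mpr hx.2,
      starProjection_orthogonal_apply_eq_zero hx.1, map_zero, add_zero]
  · rw [mem_fixedSpace, drOperator_eq, add_apply, mul_apply_eq_comp, mul_apply_eq_comp,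
      (starProjection_apply_eq_zero_iff _).mpr hx.1, map_zero, zero_add,
      starProjection_eq_self_iff.mpr hx.1, starProjection_eq_self_iff.mpr hx.2]

end DouglasRachford

section Adjoint

variable (U V : Submodule ℝ X) [U.HasOrthogonalProjection] [V.HasOrthogonalProjection]

theorem isSelfAdjoint_starProjection_add_starProjection_sub_one :
    IsSelfAdjoint (U.starProjection + V.starProjection - 1) :=
  ((isSelfAdjoint_starProjection U).add (isSelfAdjoint_starProjection V)).sub (.one _)

theorem star_drOperator : star (drOperator U V) = drOperator V U := by
  simp only [drOperator_eq, star_add, star_mul, (isSelfAdjoint_starProjection _).star_eq]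

theorem star_drOperator_mul_self :
    star (drOperator U V) * drOperator U V = (U.starProjection + V.starProjection - 1) ^ 2 := by
  rw [star_drOperator, drOperator_eq, drOperator_eq, starProjection_orthogonal',
    starProjection_orthogonal']
  exact mul_add_one_sub_mul_one_sub_eq_sq V.isIdempotentElem_starProjection

theorem drOperator_mul_star_self :
    drOperator U V * star (drOperator U V) = (U.starProjection + V.starProjection - 1) ^ 2 := by
  rw [star_drOperator, drOperator_eq, drOperator_eq, starProjection_orthogonal',
    starProjection_orthogonal', add_comm U.starProjection]
  exact mul_add_one_sub_mul_one_sub_eq_sq U.isIdempotentElem_starProjection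

end Adjoint

section FixedSpace

variable (U V : Submodule ℝ X) [CompleteSpace U] [CompleteSpace V]

local notation "𝐓" => drOperator U V
local notation "𝐅" => Submodule.starProjection (fixedSpace (drOperator U V))
local notation "𝐉" => Submodule.starProjection U + Submodule.starProjection V - 1
local notation "𝐆" => 𝐉 * Submodule.starProjection (fixedSpace (drOperator U V))ᗮ

theorem orthogonal_sup_le_topologicalClosure :
    (U ⊓ V ⊔ Uᗮ ⊓ Vᗮ)ᗮ ≤ (U ⊓ (U ⊓ V)ᗮ ⊔ V ⊓ (U ⊓ V)ᗮ).topologicalClosure := by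
  rw [← orthogonal_orthogonal_eq_closure]
  refine orthogonal_le fun y hy => ?_
  rw [← inf_orthogonal] at hy
  have hW {K : Submodule ℝ X} (hK : U ⊓ V ≤ K) (hy' : y ∈ (K ⊓ (U ⊓ V)ᗮ)ᗮ) :
      (U ⊓ V)ᗮ.starProjection y ∈ Kᗮ := by
    rw [orthogonal_eq_inf_orthogonal_of_le hK, starProjection_orthogonal_val]
    refine ⟨sub_starProjection_mem_orthogonal y, sub_mem hy' ?_⟩
    exact (le_orthogonal_orthogonal _).trans (orthogonal_le inf_le_right)
      (starProjection_apply_mem _ y)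
  rw [← (U ⊓ V).starProjection_add_starProjection_orthogonal y]
  exact add_mem_sup (starProjection_apply_mem _ y)
    (mem_inf.mpr ⟨hW inf_le_left hy.1, hW inf_le_right hy.2⟩)

theorem le_norm_sq_add_norm_sq_starProjection {x : X} (hx : x ∈ (U ⊓ V ⊔ Uᗮ ⊓ Vᗮ)ᗮ) :
    (1 - friedrichs U V) * ‖x‖ ^ 2 ≤ ‖U.starProjection x‖ ^ 2 + ‖V.starProjection x‖ ^ 2 := by
  have hclosed : IsClosed {x : X | (1 - friedrichs U V) * ‖x‖ ^ 2 ≤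
      ‖U.starProjection x‖ ^ 2 + ‖V.starProjection x‖ ^ 2} :=
    isClosed_le (by fun_prop) (by fun_prop)
  refine closure_minimal (s := ((U ⊓ (U ⊓ V)ᗮ ⊔ V ⊓ (U ⊓ V)ᗮ : Submodule ℝ X) : Set X))
    (fun y hy => le_norm_sq_add_norm_sq_starProjection_of_mem_sup U V hy) hclosed ?_
  rw [← topologicalClosure_coe]
  exact orthogonal_sup_le_topologicalClosure U V hx

theorem starProjection_fixedSpace_drOperator :
    𝐅 = (U ⊓ V).starProjection + (Uᗮ ⊓ Vᗮ).starProjection :=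
  starProjection_eq_add_of_isOrtho (U.isOrtho_orthogonal_right.mono inf_le_left inf_le_left)
    (fixedSpace_drOperator U V)

theorem fixedSpace_star_drOperator : fixedSpace (star 𝐓) = fixedSpace 𝐓 := by
  rw [star_drOperator, fixedSpace_drOperator, fixedSpace_drOperator, inf_comm V, inf_comm Vᗮ]

theorem star_drOperator_mul_starProjection_fixedSpace : star 𝐓 * 𝐅 = 𝐅 :=
  mul_starProjection_of_le_fixedSpace (fixedSpace_star_drOperator U V).ge

theorem starProjection_fixedSpace_mul_drOperator : 𝐅 * 𝐓 = 𝐅 := by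
  simpa only [star_mul, star_star, (isSelfAdjoint_starProjection _).star_eq] using
    congrArg star (star_drOperator_mul_starProjection_fixedSpace U V)

theorem star_drOperator_sub_mul_self : star (𝐓 - 𝐅) * (𝐓 - 𝐅) = 𝐉 ^ 2 - 𝐅 := by
  rw [star_sub, (isSelfAdjoint_starProjection _).star_eq,
    sub_mul_sub_of_mul_eq (star_drOperator_mul_starProjection_fixedSpace U V)
      (starProjection_fixedSpace_mul_drOperator U V) (isIdempotentElem_starProjection _),
    star_drOperator_mul_self]

theorem drOperator_sub_mul_star_self : (𝐓 - 𝐅) * star (𝐓 - 𝐅) = 𝐉 ^ 2 - 𝐅 := by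
  have hFT : 𝐅 * star 𝐓 = 𝐅 := by
    simpa only [star_mul, (isSelfAdjoint_starProjection _).star_eq] using
      congrArg star (mul_starProjection_of_le_fixedSpace (T := 𝐓) le_rfl)
  rw [star_sub, (isSelfAdjoint_starProjection _).star_eq,
    sub_mul_sub_of_mul_eq (mul_starProjection_of_le_fixedSpace le_rfl) hFT
      (isIdempotentElem_starProjection _), drOperator_mul_star_self]

instance isStarNormal_drOperator_sub : IsStarNormal (𝐓 - 𝐅) :=
  ⟨(star_drOperator_sub_mul_self U V).trans (drOperator_sub_mul_star_self U V).symm⟩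

theorem mul_starProjection_inf : 𝐉 * (U ⊓ V).starProjection = (U ⊓ V).starProjection := by
  rw [sub_mul, add_mul, mul_starProjection_of_le inf_le_left, mul_starProjection_of_le inf_le_right,
    one_mul, add_sub_cancel_right]

theorem mul_starProjection_inf_orthogonal :
    𝐉 * (Uᗮ ⊓ Vᗮ).starProjection = -(Uᗮ ⊓ Vᗮ).starProjection := by
  rw [sub_mul, add_mul,
    starProjection_mul_of_isOrtho (U.isOrtho_orthogonal_right.mono le_rfl inf_le_left),
    starProjection_mul_of_isOrtho (V.isOrtho_orthogonal_right.mono le_rfl inf_le_right), one_mul,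
    add_zero, zero_sub]

theorem mul_starProjection_fixedSpace_drOperator :
    𝐉 * 𝐅 = (U ⊓ V).starProjection - (Uᗮ ⊓ Vᗮ).starProjection := by
  rw [starProjection_fixedSpace_drOperator, mul_add, mul_starProjection_inf,
    mul_starProjection_inf_orthogonal, sub_eq_add_neg]

theorem commute_starProjection_fixedSpace_drOperator : Commute 𝐉 𝐅 := by
  rw [(isSelfAdjoint_starProjection_add_starProjection_sub_one U V).commute_iff
    (isSelfAdjoint_starProjection _), mul_starProjection_fixedSpace_drOperator]
  exact (isSelfAdjoint_starProjection _).sub (isSelfAdjoint_starProjection _)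

theorem sq_mul_starProjection_fixedSpace_drOperator : 𝐉 ^ 2 * 𝐅 = 𝐅 := by
  rw [sq, mul_assoc, mul_starProjection_fixedSpace_drOperator, mul_sub, mul_starProjection_inf,
    mul_starProjection_inf_orthogonal, sub_neg_eq_add, starProjection_fixedSpace_drOperator]

theorem commute_starProjection_orthogonal_fixedSpace_drOperator :
    Commute 𝐉 (fixedSpace 𝐓)ᗮ.starProjection := by
  rw [starProjection_orthogonal']
  exact (Commute.one_right _).sub_right (commute_starProjection_fixedSpace_drOperator U V)

theorem isSelfAdjoint_mul_starProjection_orthogonal_fixedSpace : IsSelfAdjoint 𝐆 :=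
  ((isSelfAdjoint_starProjection_add_starProjection_sub_one U V).commute_iff
    (isSelfAdjoint_starProjection _)).mp
    (commute_starProjection_orthogonal_fixedSpace_drOperator U V)

theorem mul_starProjection_orthogonal_fixedSpace_sq : 𝐆 ^ 2 = 𝐉 ^ 2 - 𝐅 := by
  rw [(commute_starProjection_orthogonal_fixedSpace_drOperator U V).mul_pow,
    sq (Submodule.starProjection _), (isIdempotentElem_starProjection _).eq,
    starProjection_orthogonal', mul_sub, mul_one,
    sq_mul_starProjection_fixedSpace_drOperator]

theorem norm_drOperator_sub_eq_norm_mul_starProjection_orthogonal_fixedSpace : ‖𝐓 - 𝐅‖ = ‖𝐆‖ := by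
  have h : ‖𝐓 - 𝐅‖ * ‖𝐓 - 𝐅‖ = ‖𝐆‖ * ‖𝐆‖ := by
    rw [← CStarRing.norm_star_mul_self, ← CStarRing.norm_star_mul_self,
      star_drOperator_sub_mul_self,
      (isSelfAdjoint_mul_starProjection_orthogonal_fixedSpace U V).star_eq, ← sq,
      mul_starProjection_orthogonal_fixedSpace_sq]
  exact (mul_self_inj (norm_nonneg _) (norm_nonneg _)).mp h

theorem inner_mul_starProjection_orthogonal_fixedSpace_apply_self (x : X) :
    inner ℝ (𝐆 x) x = ‖U.starProjection ((fixedSpace 𝐓)ᗮ.starProjection x)‖ ^ 2 +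
      ‖V.starProjection ((fixedSpace 𝐓)ᗮ.starProjection x)‖ ^ 2 -
      ‖(fixedSpace 𝐓)ᗮ.starProjection x‖ ^ 2 := by
  have hQ := (fixedSpace 𝐓)ᗮ.isIdempotentElem_starProjection
  calc inner ℝ (𝐆 x) x = inner ℝ (((fixedSpace 𝐓)ᗮ.starProjection * 𝐆) x) x := by
        rw [← mul_assoc, ← (commute_starProjection_orthogonal_fixedSpace_drOperator U V).eq,
          mul_assoc, hQ.eq]
    _ = inner ℝ (𝐉 ((fixedSpace 𝐓)ᗮ.starProjection x)) ((fixedSpace 𝐓)ᗮ.starProjection x) := by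
        rw [mul_apply_eq_comp, inner_starProjection_left_eq_right, mul_apply_eq_comp]
    _ = _ := by
        rw [sub_apply, add_apply, one_apply_eq_self, inner_sub_left, inner_add_left,
          real_inner_starProjection_self, real_inner_starProjection_self,
          real_inner_self_eq_norm_sq]

theorem abs_inner_mul_starProjection_orthogonal_fixedSpace_apply_self_le (x : X) :
    |inner ℝ (𝐆 x) x| ≤ friedrichs U V * ‖x‖ ^ 2 := by
  have hy : (fixedSpace 𝐓)ᗮ.starProjection x ∈ (U ⊓ V ⊔ Uᗮ ⊓ Vᗮ)ᗮ := by
    rw [← fixedSpace_drOperator]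
    exact starProjection_apply_mem _ x
  have hupper := norm_sq_add_norm_sq_starProjection_le U V (orthogonal_le le_sup_left hy)
  have hlower := le_norm_sq_add_norm_sq_starProjection U V hy
  have hyx := pow_le_pow_left₀ (norm_nonneg _) ((fixedSpace 𝐓)ᗮ.norm_starProjection_apply_le x) 2
  have hc := friedrichs_nonneg U V
  rw [inner_mul_starProjection_orthogonal_fixedSpace_apply_self, abs_le]
  constructor <;> nlinarith

theorem norm_mul_starProjection_orthogonal_fixedSpace_le : ‖𝐆‖ ≤ friedrichs U V :=
  (isSelfAdjoint_mul_starProjection_orthogonal_fixedSpace U V).norm_le_of_abs_inner_le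
    (friedrichs_nonneg U V) (abs_inner_mul_starProjection_orthogonal_fixedSpace_apply_self_le U V)

theorem friedrichs_le_norm_drOperator_sub_starProjection_fixedSpace : friedrichs U V ≤ ‖𝐓 - 𝐅‖ := by
  refine Real.sSup_le ?_ (norm_nonneg _)
  rintro _ ⟨u, v, hu, hv, hu1, hv1, rfl⟩
  have hFu : 𝐅 u = 0 := by
    rw [starProjection_apply_eq_zero_iff, fixedSpace_drOperator, ← inf_orthogonal]
    exact ⟨hu.2, orthogonal_le inf_le_left (le_orthogonal_orthogonal U hu.1)⟩
  have hTu : 𝐓 u = V.starProjection u := by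
    rw [drOperator_eq, add_apply, mul_apply_eq_comp, mul_apply_eq_comp,
      starProjection_eq_self_iff.mpr hu.1, starProjection_orthogonal_apply_eq_zero hu.1, map_zero,
      add_zero]
  calc inner ℝ u v = inner ℝ ((𝐓 - 𝐅) u) v := by
        rw [sub_apply, hFu, sub_zero, hTu, inner_starProjection_left_eq_right,
          starProjection_eq_self_iff.mpr hv.1]
    _ ≤ ‖(𝐓 - 𝐅) u‖ * ‖v‖ := real_inner_le_norm _ _
    _ ≤ ‖𝐓 - 𝐅‖ * 1 * 1 := by gcongr; exact ((𝐓 - 𝐅).le_opNorm u).trans (by gcongr)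
    _ = ‖𝐓 - 𝐅‖ := by ring

theorem norm_drOperator_sub_starProjection_fixedSpace : ‖𝐓 - 𝐅‖ = friedrichs U V :=
  le_antisymm ((norm_drOperator_sub_eq_norm_mul_starProjection_orthogonal_fixedSpace U V).trans_le
    (norm_mul_starProjection_orthogonal_fixedSpace_le U V))
    (friedrichs_le_norm_drOperator_sub_starProjection_fixedSpace U V)

end FixedSpace

/-- `‖T^n − P_{Fix T}‖ = c_F^n` for every integer `n ≥ 1`. -/
theorem norm_drOperator_pow_sub_proj_fixedSpace
    (U V : Submodule ℝ X) [CompleteSpace U] [CompleteSpace V] (n : ℕ) (hn : 1 ≤ n) :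
    ‖(drOperator U V) ^ n - proj (fixedSpace (drOperator U V))‖ = friedrichs U V ^ n := by
  rw [proj_eq_starProjection, ← sub_pow_of_mul_eq (mul_starProjection_of_le_fixedSpace le_rfl)
    (starProjection_fixedSpace_mul_drOperator U V) (isIdempotentElem_starProjection _) hn,
    IsStarNormal.norm_pow _ hn, norm_drOperator_sub_starProjection_fixedSpace]
end
end

section
/- For every natural number n, the Douglas–Rachford operator T satisfies T^{2n} = (T T*)^n (R_V R_U)^n and T^{2n+1} = (T T*)^n T (R_V R_U)^n = (T T*)^n T* (R_V R_U)^{n+1}. -/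
noncomputable section

variable {X : Type*} [NormedAddCommGroup X] [InnerProductSpace ℝ X] [CompleteSpace X]

/-! `R_U` and `R_V` are self-adjoint involutions, so `A = R_V R_U` is unitary, and
`T = (Id + A) / 2`. Hence `T* = (Id + A*) / 2` satisfies `T* A = A T* = T`; in particular `A`
commutes with `T` and `T*`, and `T² = T T* A`, from which all three identities follow. -/

section PowDecomposition

variable {M : Type*} [Monoid M] {T S A : M}

theorem commute_of_mul_eq_of_mul_eq (hSA : S * A = T) (hAS : A * S = T) : Commute T A :=
  calc T * A = A * S * A := by rw [hAS]
    _ = A * T := by rw [mul_assoc, hSA]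

theorem pow_two_mul_eq_of_mul_eq_of_mul_eq (hSA : S * A = T) (hAS : A * S = T) (n : ℕ) :
    T ^ (2 * n) = (T * S) ^ n * A ^ n := by
  have hTSA : Commute (T * S) A :=
    (commute_of_mul_eq_of_mul_eq hSA hAS).mul_left (hSA.trans hAS.symm)
  rw [pow_mul, sq, ← hTSA.mul_pow, mul_assoc, hSA]

theorem pow_two_mul_add_one_eq_of_mul_eq_of_mul_eq (hSA : S * A = T) (hAS : A * S = T)
    (n : ℕ) : T ^ (2 * n + 1) = (T * S) ^ n * T * A ^ n := by
  rw [pow_succ, pow_two_mul_eq_of_mul_eq_of_mul_eq hSA hAS, mul_assoc,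
    ← ((commute_of_mul_eq_of_mul_eq hSA hAS).pow_right n).eq, mul_assoc]

theorem mul_mul_pow_eq_mul_mul_pow_succ (hSA : S * A = T) (P : M) (n : ℕ) :
    P * T * A ^ n = P * S * A ^ (n + 1) := by
  rw [pow_succ', mul_assoc P S, ← mul_assoc S, hSA, mul_assoc]

end PowDecomposition

theorem mul_two_nsmul_sub_one_add_one_sub {𝕜 R : Type*} [Field 𝕜] [NeZero (2 : 𝕜)] [Ring R]
    [Module 𝕜 R] (p q : R) :
    q * (2 • p - 1) + 1 - p = (2⁻¹ : 𝕜) • (1 + (2 • q - 1) * (2 • p - 1)) := by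
  rw [eq_inv_smul_iff₀ two_ne_zero, ofNat_smul_eq_nsmul 𝕜 2]
  noncomm_ring

section Unitary

variable {𝕜 R : Type*} [CommSemiring 𝕜] [StarRing 𝕜] [TrivialStar 𝕜] [Ring R] [StarRing R]
  [Algebra 𝕜 R] [StarModule 𝕜 R] {A : R}

theorem star_smul_one_add_mul_of_mem_unitary (hA : A ∈ unitary R) (c : 𝕜) :
    star (c • (1 + A)) * A = c • (1 + A) := by
  rw [star_smul, star_trivial, star_add, star_one, smul_mul_assoc, add_mul, one_mul,
    Unitary.star_mul_self_of_mem hA, add_comm]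

theorem mul_star_smul_one_add_of_mem_unitary (hA : A ∈ unitary R) (c : 𝕜) :
    A * star (c • (1 + A)) = c • (1 + A) := by
  rw [star_smul, star_trivial, star_add, star_one, mul_smul_comm, mul_add, mul_one,
    Unitary.mul_star_self_of_mem hA, add_comm]

end Unitary

theorem reflector_mem_unitary (W : Submodule ℝ X) [W.HasOrthogonalProjection] :
    reflector W ∈ unitary (X →L[ℝ] X) := by
  rw [reflector, two_nsmul, ← two_mul]
  exact isStarProjection_starProjection.two_mul_sub_one_mem_unitary

/-- for every natural number `n`, `T^{2n} = (T T*)^n (R_V R_U)^n` and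
`T^{2n+1} = (T T*)^n T (R_V R_U)^n = (T T*)^n T* (R_V R_U)^{n+1}`. -/
theorem drOperator_pow_decomposition
    (U V : Submodule ℝ X) [CompleteSpace U] [CompleteSpace V] (n : ℕ) :
    (drOperator U V) ^ (2 * n) =
      (drOperator U V * ContinuousLinearMap.adjoint (drOperator U V)) ^ n *
        (reflector V * reflector U) ^ n ∧
    (drOperator U V) ^ (2 * n + 1) =
      (drOperator U V * ContinuousLinearMap.adjoint (drOperator U V)) ^ n * drOperator U V *
        (reflector V * reflector U) ^ n ∧
    (drOperator U V) ^ (2 * n + 1) =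
      (drOperator U V * ContinuousLinearMap.adjoint (drOperator U V)) ^ n *
        ContinuousLinearMap.adjoint (drOperator U V) * (reflector V * reflector U) ^ (n + 1) := by
  have hT : drOperator U V = (2⁻¹ : ℝ) • (1 + reflector V * reflector U) :=
    mul_two_nsmul_sub_one_add_one_sub _ _
  have hA := mul_mem (reflector_mem_unitary V) (reflector_mem_unitary U)
  have hSA : star (drOperator U V) * (reflector V * reflector U) = drOperator U V := by
    rw [hT]; exact star_smul_one_add_mul_of_mem_unitary hA _
  have hAS : reflector V * reflector U * star (drOperator U V) = drOperator U V := by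
    rw [hT]; exact mul_star_smul_one_add_of_mem_unitary hA _
  simp only [← ContinuousLinearMap.star_eq_adjoint]
  exact ⟨pow_two_mul_eq_of_mul_eq_of_mul_eq hSA hAS n,
    pow_two_mul_add_one_eq_of_mul_eq_of_mul_eq hSA hAS n,
    (pow_two_mul_add_one_eq_of_mul_eq_of_mul_eq hSA hAS n).trans
      (mul_mul_pow_eq_mul_mul_pow_succ hSA _ n)⟩
end
end
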